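/- arXiv:1708.04406 — 7 statements merged into one kernel-verified Lean document; each statement's English description precedes it below -/
import Mathlib

section
/- Let H be the 7-vertex graph obtained from the triangular prism by subdividing one edge that lies in no triangle, and let s denote its unique vertex of degree 2. Let G be the graph consisting of two disjoint copies H₁ and H₂ of H together with one edge joining the degree-2 vertex of H₁ to the degree-2 vertex of H₂. Then G is a cubic (3-regular) graph on 14 vertices and the chromatic number of its square G² equals 7. -/
/-- The square of a graph: two distinct vertices are adjacent iff their
distance in `G` is at most 2 (adjacent, or having a common neighbor). -/
def graphSquare {V : Type*} (G : SimpleGraph V) : SimpleGraph V where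
  Adj u v := u ≠ v ∧ (G.Adj u v ∨ ∃ w, G.Adj u w ∧ G.Adj w v)
  symm := by
    constructor
    rintro u v ⟨hne, h | ⟨w, h1, h2⟩⟩
    · exact ⟨hne.symm, Or.inl h.symm⟩
    · exact ⟨hne.symm, Or.inr ⟨w, h2.symm, h1.symm⟩⟩
  loopless := by constructor; rintro u ⟨hne, -⟩; exact hne rfl

/-- The edges of the graph `H` obtained from the triangular prism with
vertices `a = 0, b = 1, c = 2, a' = 3, b' = 4, c' = 5` (triangles `a b c`
and `a' b' c'`, matching edges `a a'`, `b b'`, `c c'`) by subdividing the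
edge `a a'` (which lies in no triangle) with a new vertex `s = 6`;
the vertex `s = 6` is the unique vertex of degree 2. -/
def subdividedPrismEdges : List (Fin 7 × Fin 7) :=
  [(0, 1), (1, 2), (2, 0), (3, 4), (4, 5), (5, 3), (1, 4), (2, 5), (0, 6), (6, 3)]

/-- The triangular prism with the edge `a a'` subdivided by the vertex `s = 6`. -/
def subdividedPrism : SimpleGraph (Fin 7) where
  Adj u v := (u, v) ∈ subdividedPrismEdges ∨ (v, u) ∈ subdividedPrismEdges
  symm := ⟨fun _ _ h => h.symm⟩
  loopless := ⟨fun u => by fin_cases u <;> decide⟩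

instance : DecidableRel subdividedPrism.Adj := fun u v =>
  decidable_of_iff ((u, v) ∈ subdividedPrismEdges ∨ (v, u) ∈ subdividedPrismEdges) Iff.rfl

/-- Two disjoint copies of the subdivided prism, joined by one edge between
the two degree-2 vertices (the vertices `s = 6` of the two copies). -/
def twoPrisms : SimpleGraph (Fin 7 ⊕ Fin 7) where
  Adj u v :=
    match u, v with
    | .inl a, .inl b => subdividedPrism.Adj a b
    | .inr a, .inr b => subdividedPrism.Adj a b
    | .inl a, .inr b => a = 6 ∧ b = 6
    | .inr a, .inl b => a = 6 ∧ b = 6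
  symm := by
    constructor
    rintro (a | a) (b | b) h
    · exact subdividedPrism.symm.symm _ _ h
    · exact ⟨h.2, h.1⟩
    · exact ⟨h.2, h.1⟩
    · exact subdividedPrism.symm.symm _ _ h
  loopless := by
    constructor
    rintro (a | a) h
    · exact subdividedPrism.loopless.irrefl a h
    · exact subdividedPrism.loopless.irrefl a h

instance : DecidableRel twoPrisms.Adj := fun u v =>
  match u, v with
  | .inl a, .inl b => inferInstanceAs (Decidable (subdividedPrism.Adj a b))
  | .inr a, .inr b => inferInstanceAs (Decidable (subdividedPrism.Adj a b))
  | .inl a, .inr b => inferInstanceAs (Decidable (a = 6 ∧ b = 6))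
  | .inr a, .inl b => inferInstanceAs (Decidable (a = 6 ∧ b = 6))

/-! Each copy of `H` has diameter 2, so its seven vertices form a clique in `G²` and
`χ(G²) ≥ 7`. Seven colours suffice: colour each copy bijectively and permute the colours of the
second copy so that the few pairs at distance at most 2 through the bridge, namely `s` of one copy
against `s` and its two neighbours in the other, get different colours. -/

open SimpleGraph

instance {V : Type*} [Fintype V] [DecidableEq V] (G : SimpleGraph V) [DecidableRel G.Adj] :
    DecidableRel (graphSquare G).Adj := fun u v =>
  inferInstanceAs (Decidable (u ≠ v ∧ (G.Adj u v ∨ ∃ w, G.Adj u w ∧ G.Adj w v)))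

theorem graphSquare_adj_map {V W : Type*} {G : SimpleGraph V} {G' : SimpleGraph W} (f : G →g G')
    (hf : Function.Injective f) {u v : V} (h : (graphSquare G).Adj u v) :
    (graphSquare G').Adj (f u) (f v) := by
  obtain ⟨hne, huv | ⟨w, huw, hwv⟩⟩ := h
  · exact ⟨hf.ne hne, .inl (f.map_adj huv)⟩
  · exact ⟨hf.ne hne, .inr ⟨f w, f.map_adj huw, f.map_adj hwv⟩⟩

theorem graphSquare_subdividedPrism : graphSquare subdividedPrism = ⊤ := by
  ext u v
  rw [top_adj]
  revert u v
  decide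

def twoPrismsLeftCopy : subdividedPrism →g twoPrisms where
  toFun := Sum.inl
  map_rel' h := h

theorem twoPrisms_isRegularOfDegree_three : twoPrisms.IsRegularOfDegree 3 := by
  unfold IsRegularOfDegree
  decide

/-- In the second copy `s` and its neighbours `0, 3` get colours `1, 0, 3`, all different from
the colour `6` of the first `s`, and `1` avoids the colours `0, 3, 6` of the first `s` and its
neighbours. -/
def twoPrismsSquareColoring : (graphSquare twoPrisms).Coloring (Fin 7) :=
  Coloring.mk (Sum.elim id ![0, 2, 4, 3, 5, 6, 1]) (by decide)

theorem chromaticNumber_graphSquare_twoPrisms : (graphSquare twoPrisms).chromaticNumber = 7 := by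
  refine le_antisymm ?_ ?_
  · simpa using twoPrismsSquareColoring.colorable.chromaticNumber_le
  · refine le_chromaticNumber_of_pairwise_adj (by simp) Sum.inl fun i j hij => ?_
    apply graphSquare_adj_map twoPrismsLeftCopy Sum.inl_injective
    rw [graphSquare_subdividedPrism]
    exact hij

/-- The graph `G` made of two disjoint copies of the subdivided prism joined by
an edge between their degree-2 vertices is a cubic graph on 14 vertices whose
square has chromatic number 7. -/
theorem twoPrisms_cubic_card_and_chromaticNumber_square :
    Fintype.card (Fin 7 ⊕ Fin 7) = 14 ∧
      twoPrisms.IsRegularOfDegree 3 ∧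
      (graphSquare twoPrisms).chromaticNumber = 7 :=
  ⟨rfl, twoPrisms_isRegularOfDegree_three, chromaticNumber_graphSquare_twoPrisms⟩
end

section
/- Let n ≥ 5 with n ≡ 2 (mod 3). Then for every vertex v of the cycle graph C_n, the subgraph of the square (C_n)² induced on the remaining n − 1 vertices is not 3-colorable. (This is the assertion that in the square of a 'forbidden cycle' of length n ≡ 2 (mod 3) with exactly one non-blue vertex, the blue vertices cannot be properly colored with three colors.) -/
/-!
Shifting by `v` maps the path `1, 2, …, n - 1` onto the vertices of `C_n` other than `v`, so the
square of the path on `n - 1` vertices maps into the graph, and its two ends `v + 1`, `v - 1` are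
also adjacent there through `v`. In a 3-colouring of the square of a path any three consecutive
vertices form a triangle, so the colouring is 3-periodic; as `n - 2 ≡ 0 (mod 3)`, the two ends get
the same colour.
-/

theorem Fin.eq_of_ne_of_ne {a b x y : Fin 3} (hab : a ≠ b) (hxa : x ≠ a) (hxb : x ≠ b)
    (hya : y ≠ a) (hyb : y ≠ b) : x = y := by
  revert a b x y; decide

namespace SimpleGraph

variable {V W : Type*} {G : SimpleGraph V} {H : SimpleGraph W}

def Hom.graphSquare (f : G →g H) (hf : Function.Injective f) :
    _root_.graphSquare G →g _root_.graphSquare H where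
  toFun := f
  map_rel' := by
    rintro u v ⟨hne, huv | ⟨w, huw, hwv⟩⟩
    · exact ⟨hf.ne hne, Or.inl (f.map_adj huv)⟩
    · exact ⟨hf.ne hne, Or.inr ⟨f w, f.map_adj huw, f.map_adj hwv⟩⟩

theorem graphSquare_pathGraph_adj_of_lt {n : ℕ} {i j : Fin n} (hij : i < j)
    (hji : j.val ≤ i.val + 2) : (graphSquare (pathGraph n)).Adj i j := by
  refine ⟨hij.ne, ?_⟩
  rcases (show j.val = i.val + 1 ∨ j.val = i.val + 2 by omega) with h | h
  · exact Or.inl (pathGraph_adj.mpr (Or.inl h.symm))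
  · exact Or.inr ⟨⟨i + 1, by omega⟩, pathGraph_adj.mpr (Or.inl rfl),
      pathGraph_adj.mpr (Or.inl h.symm)⟩

theorem Coloring.graphSquare_pathGraph_eq_zero_of_mod_three {n : ℕ}
    (C : (graphSquare (pathGraph n)).Coloring (Fin 3)) (i : Fin n) (hi : i.val % 3 = 0) :
    C i = C ⟨0, i.pos⟩ := by
  obtain ⟨i, hin⟩ := i
  obtain ⟨k, rfl⟩ := Nat.dvd_of_mod_eq_zero hi
  clear hi
  induction k with
  | zero => rfl
  | succ k ih =>
    have ne : ∀ i j (hij : i < j) (hji : j ≤ i + 2) (hjn : j < n),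
        C ⟨i, by omega⟩ ≠ C ⟨j, hjn⟩ := fun _ _ hij hji _ =>
      C.valid (graphSquare_pathGraph_adj_of_lt (Fin.mk_lt_mk.mpr hij) hji)
    rw [← ih (by omega)]
    -- `3k + 1` and `3k + 2` have distinct colours, both differing from those of `3k` and `3k + 3`.
    exact Fin.eq_of_ne_of_ne (ne (3 * k + 1) (3 * k + 2) (by omega) (by omega) (by omega))
      (ne _ _ (by omega) (by omega) _).symm (ne _ _ (by omega) (by omega) _).symm
      (ne _ _ (by omega) (by omega) _) (ne _ _ (by omega) (by omega) _)

theorem cycleGraph_adj_add_left {m : ℕ} {v a b : Fin (m + 2)} :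
    (cycleGraph (m + 2)).Adj (v + a) (v + b) ↔ (cycleGraph (m + 2)).Adj a b := by
  simp only [cycleGraph_adj, add_sub_add_left_eq_sub]

def pathGraphHomCycleGraph {m : ℕ} (v : Fin (m + 2)) :
    pathGraph (m + 1) →g cycleGraph (m + 2) where
  toFun i := v + i.succ
  map_rel' h := cycleGraph_adj_add_left.mpr <| pathGraph_le_cycleGraph <| by
    rw [pathGraph_adj] at h ⊢
    simpa using h

theorem pathGraphHomCycleGraph_injective {m : ℕ} (v : Fin (m + 2)) :
    Function.Injective (pathGraphHomCycleGraph v) := fun _ _ h =>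
  Fin.succ_injective _ (add_left_cancel h)

theorem pathGraphHomCycleGraph_ne {m : ℕ} (v : Fin (m + 2)) (i : Fin (m + 1)) :
    pathGraphHomCycleGraph v i ≠ v := by
  simp [pathGraphHomCycleGraph, Fin.succ_ne_zero]

def pathGraphHomInduceCompl {m : ℕ} (v : Fin (m + 2)) :
    graphSquare (pathGraph (m + 1)) →g (graphSquare (cycleGraph (m + 2))).induce {v}ᶜ where
  toFun i := ⟨pathGraphHomCycleGraph v i, pathGraphHomCycleGraph_ne v i⟩
  map_rel' h :=
    ((pathGraphHomCycleGraph v).graphSquare (pathGraphHomCycleGraph_injective v)).map_adj h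

theorem pathGraphHomInduceCompl_adj_zero_last {m : ℕ} (v : Fin (m + 3)) :
    ((graphSquare (cycleGraph (m + 3))).induce {v}ᶜ).Adj (pathGraphHomInduceCompl v 0)
      (pathGraphHomInduceCompl v (Fin.last (m + 1))) := by
  refine ⟨(pathGraphHomCycleGraph_injective v).ne (Fin.last_pos).ne, Or.inr ⟨v, ?_, ?_⟩⟩
  · simp [pathGraphHomInduceCompl, pathGraphHomCycleGraph, cycleGraph_adj]
  · simp [pathGraphHomInduceCompl, pathGraphHomCycleGraph, cycleGraph_adj]

end SimpleGraph

/-- For `n ≥ 5` with `n ≡ 2 (mod 3)`, deleting any one vertex from the square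
of the cycle `C_n` leaves a graph (induced on the remaining `n - 1` vertices)
that is not `3`-colorable. -/
theorem not_colorable_three_square_cycleGraph_delete_vertex
    (n : ℕ) (hn : 5 ≤ n) (hmod : n % 3 = 2) (v : Fin n) :
    ¬ ((graphSquare (SimpleGraph.cycleGraph n)).induce ({v}ᶜ : Set (Fin n))).Colorable 3 := by
  obtain ⟨m, rfl⟩ : ∃ m, n = m + 3 := ⟨n - 3, by omega⟩
  rintro ⟨C⟩
  have hlast : (Fin.last (m + 1)).val % 3 = 0 := by simp; omega
  have hends := SimpleGraph.Coloring.graphSquare_pathGraph_eq_zero_of_mod_three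
    (C.comp (SimpleGraph.pathGraphHomInduceCompl v)) _ hlast
  exact C.valid (SimpleGraph.pathGraphHomInduceCompl_adj_zero_last v) hends.symm
end

section
/- Let n ≥ 4 with n ≡ 1 (mod 3). Then for every vertex v of the cycle graph C_n, the subgraph of the square (C_n)² induced on the remaining n − 1 vertices is 3-colorable. (This shows that a 'dangerous cycle' of length n ≡ 1 (mod 3), all but one of whose vertices are blue, is not forbidden: its blue vertices can still be properly 3-colored in the square.) -/
open SimpleGraph

theorem graphSquare_circulantGraph_singleton_le {G : Type*} [AddGroup G] (g : G) :
    graphSquare (circulantGraph {g}) ≤ circulantGraph {g, g + g} := by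
  rintro a b ⟨hab, hadj | ⟨w, haw, hwb⟩⟩
  · exact (circulantGraph_adj _ a b ▸ hadj).imp_right (Or.imp Or.inl Or.inl)
  · simp only [circulantGraph_adj, Set.mem_singleton_iff, Set.mem_insert_iff] at haw hwb ⊢
    refine ⟨hab, ?_⟩
    rcases haw with ⟨-, haw | hwa⟩ <;> rcases hwb with ⟨-, hwb | hbw⟩
    · exact Or.inl (Or.inr (by rw [← sub_add_sub_cancel a w b, haw, hwb]))
    · exact absurd (sub_left_injective (haw.trans hbw.symm)) hab
    · exact absurd (sub_right_injective (hwa.trans hwb.symm)).symm hab.symm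
    · exact Or.inr (Or.inr (by rw [← sub_add_sub_cancel b w a, hbw, hwa]))

theorem Fin.val_mod_three_ne_of_sub_mem {n : ℕ} [NeZero n] (hn : n % 3 = 1) {x y : Fin n}
    (hx : x ≠ 0) (hy : y ≠ 0) (hxy : x - y ∈ ({1, 2} : Set (Fin n))) :
    x.val % 3 ≠ y.val % 3 := by
  have h3 : 3 ≤ n := by
    by_contra h
    obtain rfl : n = 1 := by omega
    exact hx (Subsingleton.elim _ _)
  have hd : (x - y).val = 1 ∨ (x - y).val = 2 := by
    rcases hxy with h | h
    · exact Or.inl (by rw [h, Fin.val_one', Nat.mod_eq_of_lt (by omega)])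
    · exact Or.inr (by rw [h, Fin.coe_ofNat_eq_mod, Nat.mod_eq_of_lt (by omega)])
  have hx0 := Fin.val_ne_zero_iff.mpr hx
  have hy0 := Fin.val_ne_zero_iff.mpr hy
  have hyn := y.isLt
  rcases le_or_gt y x with hle | hlt
  · rw [Fin.sub_val_of_le hle] at hd
    omega
  · rw [Fin.coe_sub_iff_lt.mpr hlt] at hd
    omega

theorem colorable_three_induce_compl_singleton_circulantGraph {n : ℕ} [NeZero n]
    (hn : n % 3 = 1) (v : Fin n) :
    ((circulantGraph ({1, 2} : Set (Fin n))).induce {v}ᶜ).Colorable 3 := by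
  refine ⟨Coloring.mk (fun u => ⟨(u.1 - v).val % 3, Nat.mod_lt _ (by norm_num)⟩) ?_⟩
  rintro ⟨a, ha⟩ ⟨b, hb⟩ hab
  have hav : a - v ≠ 0 := sub_ne_zero.mpr ha
  have hbv : b - v ≠ 0 := sub_ne_zero.mpr hb
  obtain ⟨-, hab | hba⟩ := (circulantGraph_adj _ a b).mp hab
  · rw [← sub_sub_sub_cancel_right a b v] at hab
    simpa [Fin.ext_iff] using Fin.val_mod_three_ne_of_sub_mem hn hav hbv hab
  · rw [← sub_sub_sub_cancel_right b a v] at hba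
    simpa [Fin.ext_iff, eq_comm] using Fin.val_mod_three_ne_of_sub_mem hn hbv hav hba

theorem colorable_three_square_cycleGraph_delete_vertex_general
    (n : ℕ) (hmod : n % 3 = 1) (v : Fin n) :
    ((graphSquare (SimpleGraph.cycleGraph n)).induce ({v}ᶜ : Set (Fin n))).Colorable 3 := by
  obtain ⟨m, rfl⟩ : ∃ m, n = m + 1 := ⟨n - 1, by omega⟩
  have hle : graphSquare (cycleGraph (m + 1)) ≤ circulantGraph {1, 2} := by
    have h2 : (1 + 1 : Fin (m + 1)) = 2 := Fin.ext (by simp [Fin.val_add])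
    rw [cycleGraph_eq_circulantGraph, ← h2]
    exact graphSquare_circulantGraph_singleton_le 1
  exact (colorable_three_induce_compl_singleton_circulantGraph hmod v).mono_left
    (comap_monotone _ hle)

/-- For `n ≥ 4` with `n ≡ 1 (mod 3)`, deleting any one vertex from the square
of the cycle `C_n` leaves a graph (induced on the remaining `n - 1` vertices)
that is `3`-colorable. -/
theorem colorable_three_square_cycleGraph_delete_vertex
    (n : ℕ) (hn : 4 ≤ n) (hmod : n % 3 = 1) (v : Fin n) :
    ((graphSquare (SimpleGraph.cycleGraph n)).induce ({v}ᶜ : Set (Fin n))).Colorable 3 :=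
  colorable_three_square_cycleGraph_delete_vertex_general n hmod v
end

section
/- Let G be a cubic (3-regular) graph whose vertex set is partitioned into a blue set B and a red set R such that the subgraph of G induced on B has maximum degree at most 1 (it is a matching plus isolated vertices) and every vertex of R has at least one neighbor in R. Then the subgraph of the square G² induced on B has maximum degree at most 3; that is, every blue vertex is adjacent in G² to at most 3 other blue vertices. -/
/-!
Assign to each blue vertex `u ≠ v` within distance 2 of the blue vertex `v` a neighbour `w`
of `v` with `u = w` or `u ~ w`. Each `w` receives at most one such `u`: a blue `w` has no blue
neighbour besides `v`, while the three neighbours of a red `w` are `v`, a red vertex and at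
most one more. Hence there are at most `deg v = 3` such `u`.
-/

theorem Set.ncard_le_ncard_of_forall_subsingleton {α β : Type*} {s : Set α} {t : Set β}
    (r : α → β → Prop) (hs : ∀ a ∈ s, ∃ b ∈ t, r a b)
    (ht : ∀ b ∈ t, {a ∈ s | r a b}.Subsingleton) (htf : t.Finite := by toFinite_tac) :
    s.ncard ≤ t.ncard := by
  have : Finite t := htf
  choose f hft hfr using hs
  rw [← Nat.card_coe_set_eq, ← Nat.card_coe_set_eq]
  refine Nat.card_le_card_of_injective (fun a : s => ⟨f a a.2, hft a a.2⟩) ?_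
  rintro ⟨a, ha⟩ ⟨a', ha'⟩ hf
  have hff : f a ha = f a' ha' := congrArg Subtype.val hf
  exact Subtype.ext (ht _ (hft a ha) ⟨ha, hfr a ha⟩ ⟨ha', hff ▸ hfr a' ha'⟩)

theorem graphSquare_adj_iff_exists {V : Type*} {G : SimpleGraph V} {u v : V} :
    (graphSquare G).Adj v u ↔ v ≠ u ∧ ∃ w, G.Adj v w ∧ (w = u ∨ G.Adj w u) := by
  constructor
  · rintro ⟨hne, hvu | ⟨w, hvw, hwu⟩⟩
    · exact ⟨hne, u, hvu, Or.inl rfl⟩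
    · exact ⟨hne, w, hvw, Or.inr hwu⟩
  · rintro ⟨hne, w, hvw, rfl | hwu⟩
    · exact ⟨hne, Or.inl hvw⟩
    · exact ⟨hne, Or.inr ⟨w, hvw, hwu⟩⟩

namespace SimpleGraph

variable {V : Type*} {G : SimpleGraph V} {B : Set V} {v w r : V}

theorem subsingleton_adj_of_ncard_neighborSet_le_three (hfin : (G.neighborSet w).Finite)
    (hdeg : (G.neighborSet w).ncard ≤ 3) (hv : v ∈ B) (hwv : G.Adj w v) (hr : r ∉ B)
    (hwr : G.Adj w r) : {u ∈ B | u ≠ v ∧ G.Adj w u}.Subsingleton := by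
  set A := {u ∈ B | u ≠ v ∧ G.Adj w u}
  have hA : A.Finite := hfin.subset fun u hu => hu.2.2
  have hsub : insert v (insert r A) ⊆ G.neighborSet w := by
    rintro x (rfl | rfl | ⟨-, -, hwx⟩)
    exacts [hwv, hwr, hwx]
  have hcard : (insert v (insert r A)).ncard = A.ncard + 2 := by
    have hvr : v ∉ insert r A := by
      rintro (rfl | ⟨-, hvv, -⟩)
      exacts [hr hv, hvv rfl]
    have hrA : r ∉ A := fun h => hr h.1
    rw [Set.ncard_insert_of_notMem hvr (hA.insert r), Set.ncard_insert_of_notMem hrA hA]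
  have hle := Set.ncard_le_ncard hsub hfin
  intro a ha b hb
  exact (Set.ncard_le_one hA).1 (by omega) a ha b hb

theorem subsingleton_blue_eq_or_adj (hfin : (G.neighborSet w).Finite)
    (hdeg : (G.neighborSet w).ncard ≤ 3) (hblue : w ∈ B → {x ∈ B | G.Adj w x}.ncard ≤ 1)
    (hred : w ∉ B → ∃ r ∉ B, G.Adj w r) (hv : v ∈ B) (hwv : G.Adj w v) :
    {u ∈ B | u ≠ v ∧ (w = u ∨ G.Adj w u)}.Subsingleton := by
  by_cases hw : w ∈ B
  · refine (Set.subsingleton_singleton (a := w)).anti ?_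
    rintro u ⟨hu, huv, rfl | hwu⟩
    · rfl
    · have hfinB : {x ∈ B | G.Adj w x}.Finite := hfin.subset fun x hx => hx.2
      exact absurd ((Set.ncard_le_one hfinB).1 (hblue hw) u ⟨hu, hwu⟩ v ⟨hv, hwv⟩) huv
  · obtain ⟨r, hr, hwr⟩ := hred hw
    refine (subsingleton_adj_of_ncard_neighborSet_le_three hfin hdeg hv hwv hr hwr).anti ?_
    rintro u ⟨hu, huv, rfl | hwu⟩
    exacts [absurd hu hw, ⟨hu, huv, hwu⟩]

end SimpleGraph

theorem blue_square_graph_maxDegree_le_three_general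
    {V : Type*} (G : SimpleGraph V) (B : Set V)
    (hcubic : ∀ v : V, {u | G.Adj v u}.ncard = 3)
    (hblue : ∀ v ∈ B, ({u ∈ B | G.Adj v u} : Set V).ncard ≤ 1)
    (hred : ∀ v ∉ B, ∃ u ∉ B, G.Adj v u) :
    ∀ v ∈ B, ({u ∈ B | (graphSquare G).Adj v u} : Set V).ncard ≤ 3 := by
  intro v hv
  have hfin (w : V) : (G.neighborSet w).Finite :=
    Set.finite_of_ncard_pos ((hcubic w).symm ▸ three_pos)
  calc ({u ∈ B | (graphSquare G).Adj v u} : Set V).ncard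
      ≤ (G.neighborSet v).ncard := by
        refine Set.ncard_le_ncard_of_forall_subsingleton (fun u w => w = u ∨ G.Adj w u)
          (fun u ⟨_, hvu⟩ => (graphSquare_adj_iff_exists.1 hvu).2) (fun w hvw => ?_) (hfin v)
        refine (SimpleGraph.subsingleton_blue_eq_or_adj (hfin w) (hcubic w).le (hblue w)
          (hred w) hv hvw.symm).anti ?_
        rintro u ⟨⟨hu, hvu⟩, hwu⟩
        exact ⟨hu, (graphSquare_adj_iff_exists.1 hvu).1.symm, hwu⟩
    _ = 3 := hcubic v

/-- Let `G` be a cubic graph whose vertices are partitioned into a blue set `B`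
and a red set `Bᶜ` such that the subgraph induced on `B` has maximum degree at
most 1 and every red vertex has at least one red neighbor. Then every blue
vertex has at most 3 blue neighbors in the square `G²`. -/
theorem blue_square_graph_maxDegree_le_three
    {V : Type*} [Fintype V] (G : SimpleGraph V) (B : Set V)
    (hcubic : ∀ v : V, {u | G.Adj v u}.ncard = 3)
    (hblue : ∀ v ∈ B, ({u ∈ B | G.Adj v u} : Set V).ncard ≤ 1)
    (hred : ∀ v ∉ B, ∃ u ∉ B, G.Adj v u) :
    ∀ v ∈ B, ({u ∈ B | (graphSquare G).Adj v u} : Set V).ncard ≤ 3 :=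
  blue_square_graph_maxDegree_le_three_general G B hcubic hblue hred
end

section
/- Let G be a graph of maximum degree at most 3 and let v be a vertex of G of degree at most 2. Define G' as follows: if v has exactly two neighbors a and b and they are nonadjacent, let G' be G − v with the edge ab added; otherwise let G' = G − v. If the square (G')² is 7-colorable, then the square G² is 7-colorable. -/
namespace SimpleGraph

variable {V : Type*}

theorem ncard_neighborSet_graphSquare_le (G : SimpleGraph V) [G.LocallyFinite] (v : V) {Δ : ℕ}
    (hΔ : ∀ x ∈ G.neighborSet v, (G.neighborSet x).ncard ≤ Δ) :
    ((graphSquare G).neighborSet v).ncard ≤ (G.neighborSet v).ncard * Δ := by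
  classical
  have hsub : (graphSquare G).neighborSet v ⊆
      ⋃ x ∈ (G.neighborSet v).toFinset, insert x (G.neighborSet x \ {v}) := by
    rintro w ⟨hvw, hw | ⟨x, hvx, hxw⟩⟩
    · exact Set.mem_biUnion (Set.mem_toFinset.mpr hw) (Set.mem_insert w _)
    · exact Set.mem_biUnion (Set.mem_toFinset.mpr hvx) (Or.inr ⟨hxw, hvw.symm⟩)
  calc ((graphSquare G).neighborSet v).ncard
      ≤ (⋃ x ∈ (G.neighborSet v).toFinset, insert x (G.neighborSet x \ {v})).ncard :=
        Set.ncard_le_ncard hsub (Set.Finite.biUnion (Finset.finite_toSet _)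
          fun x _ => ((G.neighborSet x).toFinite.sdiff).insert x)
    _ ≤ ∑ x ∈ (G.neighborSet v).toFinset, (insert x (G.neighborSet x \ {v})).ncard :=
        Finset.set_ncard_biUnion_le _ _
    _ = ∑ x ∈ (G.neighborSet v).toFinset, (G.neighborSet x).ncard :=
        Finset.sum_congr rfl fun x hx =>
          Set.ncard_exchange G.notMem_neighborSet_self (Set.mem_toFinset.mp hx).symm
    _ ≤ (G.neighborSet v).ncard * Δ := by
        rw [Set.ncard_eq_toFinset_card']
        exact Finset.sum_le_card_nsmul _ _ _ fun x hx => hΔ x (Set.mem_toFinset.mp hx)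

theorem colorable_of_colorable_induce_compl_singleton {H : SimpleGraph V} {v : V} {n : ℕ}
    (hfin : (H.neighborSet v).Finite) (hv : (H.neighborSet v).ncard < n)
    (h : (H.induce {v}ᶜ).Colorable n) : H.Colorable n := by
  classical
  obtain ⟨c⟩ := h
  have hused : (c '' (Subtype.val ⁻¹' H.neighborSet v)).ncard < n :=
    calc (c '' (Subtype.val ⁻¹' H.neighborSet v)).ncard
        ≤ (Subtype.val ⁻¹' H.neighborSet v : Set ({v}ᶜ : Set V)).ncard :=
          Set.ncard_image_le (hfin.preimage Subtype.val_injective.injOn)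
      _ = (H.neighborSet v).ncard :=
          Set.ncard_preimage_of_injective_subset_range Subtype.val_injective
            fun w hw => ⟨⟨w, (H.ne_of_adj hw).symm⟩, rfl⟩
      _ < n := hv
  obtain ⟨k, hk⟩ : ∃ k, k ∉ c '' (Subtype.val ⁻¹' H.neighborSet v) := by
    by_contra! hall
    rw [Set.eq_univ_of_forall hall, Set.ncard_univ, Nat.card_fin] at hused
    exact lt_irrefl n hused
  refine ⟨Coloring.mk (fun w => if hw : w = v then k else c ⟨w, hw⟩) ?_⟩
  intro u w huw
  by_cases hu : u = v <;> by_cases hw : w = v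
  · exact absurd (hu.trans hw.symm) huw.ne
  · subst hu
    simp only [dif_pos, dif_neg hw]
    exact fun hkw => hk ⟨⟨w, hw⟩, huw, hkw.symm⟩
  · subst hw
    simp only [dif_pos, dif_neg hu]
    exact fun hku => hk ⟨⟨u, hu⟩, huw.symm, hku⟩
  · simp only [dif_neg hu, dif_neg hw]
    exact c.valid huw

theorem colorable_induce_compl_singleton_graphSquare {G : SimpleGraph V} {v : V}
    {G' : SimpleGraph {x // x ≠ v}} {n : ℕ} (hadj : ∀ a b : {x // x ≠ v}, G.Adj a b → G'.Adj a b)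
    (hclique : ∀ a b : {x // x ≠ v}, a ≠ b → G.Adj v a → G.Adj v b → G'.Adj a b)
    (h : (graphSquare G').Colorable n) : ((graphSquare G).induce {v}ᶜ).Colorable n := by
  refine h.of_hom ⟨fun a => ⟨a.1, a.2⟩, ?_⟩
  rintro a b ⟨hab, hG | ⟨x, hax, hxb⟩⟩ <;>
    replace hab : (⟨a.1, a.2⟩ : {x // x ≠ v}) ≠ ⟨b.1, b.2⟩ := fun h => hab (congrArg Subtype.val h)
  · exact ⟨hab, Or.inl (hadj _ _ hG)⟩
  by_cases hx : x = v
  · subst hx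
    exact ⟨hab, Or.inl (hclique _ _ hab hax.symm hxb)⟩
  · exact ⟨hab, Or.inr ⟨⟨x, hx⟩, hadj ⟨a.1, a.2⟩ ⟨x, hx⟩ hax, hadj ⟨x, hx⟩ ⟨b.1, b.2⟩ hxb⟩⟩

end SimpleGraph

/-- Let `G` have maximum degree at most 3 and let `v` be a vertex of degree at
most 2. Let `G'` be the graph obtained from `G - v` by adding the edge `a b`
in case `v` has exactly two neighbors `a, b` and they are nonadjacent, and
`G' = G - v` otherwise. If `(G')²` is `7`-colorable then `G²` is `7`-colorable. -/
theorem colorable_square_of_delete_small_degree_vertex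
    {V : Type*} [Fintype V] (G : SimpleGraph V)
    (hdeg : ∀ u : V, {w | G.Adj u w}.ncard ≤ 3)
    (v : V) (hv : {w | G.Adj v w}.ncard ≤ 2)
    (G' : SimpleGraph {u : V // u ≠ v})
    (hcase1 : ∀ (a b : V) (ha : a ≠ v) (hb : b ≠ v), a ≠ b →
      {w | G.Adj v w} = {a, b} → ¬ G.Adj a b →
      ∀ u w : {x : V // x ≠ v}, G'.Adj u w ↔
        (G.Adj u.1 w.1 ∨ (u = ⟨a, ha⟩ ∧ w = ⟨b, hb⟩) ∨ (u = ⟨b, hb⟩ ∧ w = ⟨a, ha⟩)))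
    (hcase2 : (¬ ∃ a b : V, a ≠ b ∧ {w | G.Adj v w} = {a, b} ∧ ¬ G.Adj a b) →
      ∀ u w : {x : V // x ≠ v}, G'.Adj u w ↔ G.Adj u.1 w.1)
    (h7 : (graphSquare G').Colorable 7) :
    (graphSquare G).Colorable 7 := by
  classical
  have hedge : ∀ a b : {x // x ≠ v}, G.Adj a b → G'.Adj a b := by
    intro a b hab
    by_cases hpair : ∃ a b : V, a ≠ b ∧ {w | G.Adj v w} = {a, b} ∧ ¬ G.Adj a b
    · obtain ⟨a', b', hne, hN, hna⟩ := hpair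
      have ha' : G.Adj v a' := (Set.ext_iff.mp hN a').mpr (Set.mem_insert a' {b'})
      have hb' : G.Adj v b' := (Set.ext_iff.mp hN b').mpr (Set.mem_insert_of_mem a' rfl)
      exact (hcase1 a' b' ha'.ne' hb'.ne' hne hN hna a b).mpr (Or.inl hab)
    · exact (hcase2 hpair a b).mpr hab
  have hclique : ∀ a b : {x // x ≠ v}, a ≠ b → G.Adj v a → G.Adj v b → G'.Adj a b := by
    intro a b hab ha hb
    by_cases hadj : G.Adj a b
    · exact hedge a b hadj
    have hab' : a.1 ≠ b.1 := Subtype.coe_ne_coe.mpr hab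
    -- `v` has degree at most two, so its two neighbours `a, b` are all of them
    have hN : {w | G.Adj v w} = {a.1, b.1} :=
      (Set.eq_of_subset_of_ncard_le (Set.insert_subset ha (Set.singleton_subset_iff.mpr hb))
        (by rwa [Set.ncard_pair hab'])).symm
    exact (hcase1 a b a.2 b.2 hab' hN hadj a b).mpr (Or.inr (Or.inl ⟨rfl, rfl⟩))
  refine SimpleGraph.colorable_of_colorable_induce_compl_singleton (Set.toFinite _) ?_
    (SimpleGraph.colorable_induce_compl_singleton_graphSquare hedge hclique h7)
  calc ((graphSquare G).neighborSet v).ncard ≤ (G.neighborSet v).ncard * 3 :=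
        G.ncard_neighborSet_graphSquare_le v fun x _ => hdeg x
    _ < 7 := by have : (G.neighborSet v).ncard ≤ 2 := hv; omega
end

section
/- Let G be a graph of maximum degree at most 3 and let e = xy be a cut-edge (bridge) of G such that G − e has exactly two connected components, G₁ containing x and G₂ containing y. If the squares G₁² and G₂² are both 7-colorable, then the square G² is 7-colorable. -/
/-!
Colour `G₁` by the given colouring of `G₁²`, and `G₂` by the given colouring of `G₂²` followed by a
permutation of the colours. The pairs at distance at most two on different sides of the bridge are
`y` with `x` or a neighbour of `x`, and `x` with `y` or a neighbour of `y`. So the permutation must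
move the colour of `y` off the at most `deg x` colours seen on `x` and its neighbours in `G₁`, and
move onto the colour of `x` some colour not seen on `y` and its neighbours in `G₂`, of which there
are at most `deg y`. A permutation with two prescribed values exists, and since `deg x, deg y < 7`
both target colours can be found.
-/

namespace Set

theorem exists_notMem_of_encard_lt_enatCard {α : Type*} {s : Set α}
    (hs : s.encard < ENat.card α) : ∃ a, a ∉ s := by
  by_contra! h
  simp [eq_univ_of_forall h] at hs

end Set

namespace Equiv.Perm

variable {α : Type*}

theorem exists_apply_eq_and_apply_eq {a b c d : α} (hab : a ≠ b) (hcd : c ≠ d) :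
    ∃ σ : Perm α, σ a = c ∧ σ b = d := by
  classical
  have hc : c ≠ swap a c b := by
    rw [Ne, eq_comm, swap_apply_eq_iff, swap_apply_right]
    exact hab.symm
  refine ⟨swap (swap a c b) d * swap a c, ?_, ?_⟩
  · simp only [coe_mul, Function.comp_apply, swap_apply_left]
    exact swap_apply_of_ne_of_ne hc hcd
  · simp only [coe_mul, Function.comp_apply, swap_apply_left]

theorem exists_apply_notMem_and_inv_apply_notMem {S D : Set α} {b t : α} (hb : b ∈ D)
    (ht : t ∈ S) (hD : D.encard < ENat.card α) (hS : S.encard < ENat.card α) :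
    ∃ σ : Perm α, σ b ∉ S ∧ σ⁻¹ t ∉ D := by
  obtain ⟨e, he⟩ := Set.exists_notMem_of_encard_lt_enatCard hS
  obtain ⟨g, hg⟩ := Set.exists_notMem_of_encard_lt_enatCard hD
  obtain ⟨σ, hσb, hσg⟩ :=
    exists_apply_eq_and_apply_eq (ne_of_mem_of_not_mem hb hg) (ne_of_mem_of_not_mem ht he).symm
  refine ⟨σ, hσb ▸ he, ?_⟩
  rwa [← hσg, ← mul_apply, inv_mul_cancel, one_apply]

end Equiv.Perm

namespace SimpleGraph

variable {V : Type*} {G : SimpleGraph V} {A : Set V} {x y : V}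

theorem graphSquare_induce_adj_of_cut (hcut : ∀ u ∈ A, ∀ v ∉ A, G.Adj u v → u = x ∧ v = y)
    {u v : A} (h : (graphSquare G).Adj u v) : (graphSquare (G.induce A)).Adj u v := by
  obtain ⟨hne, huv | ⟨w, huw, hwv⟩⟩ := h
  · exact ⟨ne_of_apply_ne _ hne, .inl huv⟩
  · refine ⟨ne_of_apply_ne _ hne, .inr ?_⟩
    by_cases hw : w ∈ A
    · exact ⟨⟨w, hw⟩, huw, hwv⟩
    · exact absurd ((hcut u u.2 w hw huw).1.trans (hcut v v.2 w hw hwv.symm).1.symm) hne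

theorem graphSquare_adj_of_cut (hcut : ∀ u ∈ A, ∀ v ∉ A, G.Adj u v → u = x ∧ v = y)
    {u v : V} (hu : u ∈ A) (hv : v ∉ A) (h : (graphSquare G).Adj u v) :
    (u ∈ insert x (G.neighborSet x) ∧ v = y) ∨ (u = x ∧ v ∈ G.neighborSet y) := by
  obtain ⟨-, huv | ⟨w, huw, hwv⟩⟩ := h
  · exact .inl ⟨.inl (hcut u hu v hv huv).1, (hcut u hu v hv huv).2⟩
  · by_cases hw : w ∈ A
    · obtain ⟨rfl, rfl⟩ := hcut w hw v hv hwv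
      exact .inl ⟨.inr huw.symm, rfl⟩
    · obtain ⟨rfl, rfl⟩ := hcut u hu w hw huw
      exact .inr ⟨rfl, hwv⟩

theorem encard_preimage_insert_neighborSet_le (hy : y ∉ A) (hxy : G.Adj x y) :
    ((Subtype.val ⁻¹' insert x (G.neighborSet x) : Set A)).encard ≤ (G.neighborSet x).encard := by
  have hsub : A ∩ insert x (G.neighborSet x) ⊆ insert x (G.neighborSet x \ {y}) := by
    rintro u ⟨huA, hu⟩
    rcases hu with rfl | hu
    · exact .inl rfl
    · exact .inr ⟨hu, fun h => hy (h ▸ huA)⟩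
  calc ((Subtype.val ⁻¹' insert x (G.neighborSet x) : Set A)).encard
      = (A ∩ insert x (G.neighborSet x)).encard := by
        rw [← Subtype.val_injective.encard_image, Subtype.image_preimage_coe]
    _ ≤ (G.neighborSet x \ {y}).encard + 1 :=
        (Set.encard_le_encard hsub).trans (Set.encard_insert_le _ _)
    _ = (G.neighborSet x).encard := Set.encard_sdiff_singleton_add_one hxy

theorem nonempty_graphSquare_coloring_of_cut {α : Type*} (hx : x ∈ A) (hy : y ∉ A)
    (hxy : G.Adj x y) (hcut : ∀ u ∈ A, ∀ v ∉ A, G.Adj u v → u = x ∧ v = y)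
    (hdx : (G.neighborSet x).encard < ENat.card α) (hdy : (G.neighborSet y).encard < ENat.card α)
    (C₁ : (graphSquare (G.induce A)).Coloring α) (C₂ : (graphSquare (G.induce Aᶜ)).Coloring α) :
    Nonempty ((graphSquare G).Coloring α) := by
  classical
  have hcut' : ∀ u ∈ Aᶜ, ∀ v ∉ Aᶜ, G.Adj u v → u = y ∧ v = x := fun u hu v hv huv =>
    (hcut v (not_not.mp hv) u hu huv.symm).symm
  obtain ⟨σ, hσy, hσx⟩ := Equiv.Perm.exists_apply_notMem_and_inv_apply_notMem
    (Set.mem_image_of_mem C₂ (show (⟨y, hy⟩ : ↥Aᶜ).val ∈ insert y (G.neighborSet y) from .inl rfl))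
    (Set.mem_image_of_mem C₁ (show (⟨x, hx⟩ : A).val ∈ insert x (G.neighborSet x) from .inl rfl))
    ((Set.encard_image_le _ _).trans_lt
      ((encard_preimage_insert_neighborSet_le (not_not.mpr hx) hxy.symm).trans_lt hdy))
    ((Set.encard_image_le _ _).trans_lt
      ((encard_preimage_insert_neighborSet_le hy hxy).trans_lt hdx))
  let c : V → α := fun u => if h : u ∈ A then C₁ ⟨u, h⟩ else σ (C₂ ⟨u, h⟩)
  have hcross : ∀ u ∈ A, ∀ v ∉ A, (graphSquare G).Adj u v → c u ≠ c v := by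
    intro u hu v hv huv
    simp only [c, dif_pos hu, dif_neg hv]
    rcases graphSquare_adj_of_cut hcut hu hv huv with ⟨hux, rfl⟩ | ⟨rfl, hvy⟩
    · exact fun h => hσy (h ▸ Set.mem_image_of_mem C₁ (show (⟨u, hu⟩ : A).val ∈ _ from hux))
    · intro h
      refine hσx ⟨⟨v, hv⟩, .inr hvy, ?_⟩
      rw [h, ← Equiv.Perm.mul_apply, inv_mul_cancel, Equiv.Perm.one_apply]
  refine ⟨Coloring.mk c fun {u v} huv => ?_⟩
  by_cases hu : u ∈ A <;> by_cases hv : v ∈ A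
  · simp only [c, dif_pos hu, dif_pos hv]
    exact C₁.valid (graphSquare_induce_adj_of_cut (u := ⟨u, hu⟩) (v := ⟨v, hv⟩) hcut huv)
  · exact hcross u hu v hv huv
  · exact (hcross v hv u hu huv.symm).symm
  · simp only [c, dif_neg hu, dif_neg hv, σ.injective.ne_iff]
    exact C₂.valid (graphSquare_induce_adj_of_cut (u := ⟨u, hu⟩) (v := ⟨v, hv⟩) hcut' huv)

theorem induce_deleteEdges_of_right_notMem {s : Set V} (hy : y ∉ s) :
    (G.deleteEdges {s(x, y)}).induce s = G.induce s := by
  ext u v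
  simp only [comap_adj, Function.Embedding.subtype_apply, deleteEdges_adj, Set.mem_singleton_iff,
    Sym2.eq_iff, and_iff_left_iff_imp]
  rintro - (⟨-, rfl⟩ | ⟨rfl, -⟩)
  exacts [hy v.2, hy u.2]

end SimpleGraph

/-- Let `G` have maximum degree at most 3 and let `xy` be a cut-edge such that
`G - xy` has exactly two connected components, `G₁` containing `x` and `G₂`
containing `y`. If `G₁²` and `G₂²` are both `7`-colorable, then `G²` is
`7`-colorable. -/
theorem colorable_square_of_bridge
    {V : Type*} [Fintype V] (G : SimpleGraph V)
    (hdeg : ∀ u : V, {w | G.Adj u w}.ncard ≤ 3)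
    (x y : V) (hxy : G.Adj x y)
    (G' : SimpleGraph V) (hG' : G' = G.deleteEdges {s(x, y)})
    (hsep : ¬ G'.Reachable x y)
    (hall : ∀ u : V, G'.Reachable u x ∨ G'.Reachable u y)
    (h1 : (graphSquare (G'.induce {u | G'.Reachable u x})).Colorable 7)
    (h2 : (graphSquare (G'.induce {u | G'.Reachable u y})).Colorable 7) :
    (graphSquare G).Colorable 7 := by
  set A := {u | G'.Reachable u x}
  have hx : x ∈ A := SimpleGraph.Reachable.refl x
  have hy : y ∉ A := fun h => hsep h.symm
  have hcompl : {u | G'.Reachable u y} = Aᶜ :=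
    Set.ext fun u => ⟨fun hu hux => hsep (hux.symm.trans hu), (hall u).resolve_left⟩
  have hcut : ∀ u ∈ A, ∀ v ∉ A, G.Adj u v → u = x ∧ v = y := by
    intro u hu v hv huv
    by_contra hne
    have hG'uv : G'.Adj u v := by
      rw [hG', SimpleGraph.deleteEdges_adj, Set.mem_singleton_iff, Sym2.eq_iff]
      exact ⟨huv, not_or.mpr ⟨hne, fun h => hy (h.1 ▸ hu)⟩⟩
    exact hv (hG'uv.symm.reachable.trans hu)
  have hdeg' : ∀ u, (G.neighborSet u).encard < ENat.card (Fin 7) := fun u => by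
    rw [← Set.coe_ncard_eq_encard, ENat.card_eq_coe_fintype_card, Fintype.card_fin]
    exact_mod_cast (hdeg u).trans_lt (by norm_num)
  rw [hG', SimpleGraph.induce_deleteEdges_of_right_notMem hy] at h1
  rw [hcompl, hG', Sym2.eq_swap,
    SimpleGraph.induce_deleteEdges_of_right_notMem (not_not.mpr hx)] at h2
  obtain ⟨C₁⟩ := h1
  obtain ⟨C₂⟩ := h2
  exact SimpleGraph.nonempty_graphSquare_coloring_of_cut hx hy hxy hcut (hdeg' x) (hdeg' y) C₁ C₂
end

section
/- Let G be a cubic graph containing two edges x₁x₂ and y₁y₂ (with x₁, x₂, y₁, y₂ distinct) such that G − x₁x₂ − y₁y₂ has exactly two connected components: G₁ containing x₁ and y₁, and G₂ containing x₂ and y₂. Assume x₁y₁ is not an edge of G, but x₂y₂ is an edge of G; let x₃ and y₃ be the third neighbors of x₂ and y₂ respectively (so x₃, y₃ ∈ V(G₂)), and assume x₃ ≠ y₃ and x₃y₃ is not an edge of G. If the squares (G₁ + x₁y₁)² and (G₂ − x₂ − y₂ + x₃y₃)² are both 7-colorable, then G² is 7-colorable. -/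
/-- The graph `H + ab` obtained from `H` by adding the edge `a b`. -/
def addEdge {α : Type*} (H : SimpleGraph α) (a b : α) : SimpleGraph α :=
  H ⊔ SimpleGraph.fromEdgeSet {s(a, b)}

/-!
Start from the given colourings of `(G₁ + x₁y₁)²` and `(G₂ - x₂ - y₂ + x₃y₃)²`. In the first,
`x₁`, `y₁` and the two other neighbours `a₁, a₂` of `x₁` lie in the closed neighbourhood of `x₁`,
so they get four distinct colours; likewise `x₃, y₃, p, q` in the second, where `p, q` are the
other neighbours of `x₃`. Permute the colours of the second piece so that `x₃, y₃, p, q` take the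
colours of `y₁, x₁, a₁, a₂`. The only edges of `G²` between the two pieces are `x₁x₃` and `y₁y₃`,
so the union is a proper colouring of `G² - x₂ - y₂`. The square neighbours of `y₂` other than
`x₂` then see at most 6 colours, and those of `x₂` at most 5 together with the colour of `y₂`,
so `y₂` and then `x₂` can be coloured greedily.
-/

open Function

namespace SimpleGraph

variable {V α : Type*} {G H : SimpleGraph V}

lemma graphSquare_mono (h : G ≤ H) : graphSquare G ≤ graphSquare H := by
  rintro u v ⟨hne, huv | ⟨w, huw, hwv⟩⟩
  exacts [⟨hne, Or.inl (h huv)⟩, ⟨hne, Or.inr ⟨w, h huw, h hwv⟩⟩]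

lemma le_addEdge (a b : V) : H ≤ addEdge H a b := le_sup_left

lemma addEdge_adj_self {a b : V} (hab : a ≠ b) : (addEdge H a b).Adj a b := by
  simp [addEdge, hab]

lemma Coloring.injOn_insert_neighborSet (C : (graphSquare H).Coloring α) (w : V) :
    Set.InjOn C (insert w (H.neighborSet w)) := by
  rintro u hu v hv hC
  by_contra hne
  refine C.valid ⟨hne, ?_⟩ hC
  rcases hu with rfl | hu <;> rcases hv with rfl | hv
  exacts [absurd rfl hne, Or.inl hv, Or.inl hu.symm, Or.inr ⟨w, hu.symm, hv⟩]

lemma neighborSet_eq_of_ncard_eq_three {u a b c : V} (h : (G.neighborSet u).ncard = 3)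
    (ha : G.Adj u a) (hb : G.Adj u b) (hc : G.Adj u c) (hab : a ≠ b) (hac : a ≠ c)
    (hbc : b ≠ c) : G.neighborSet u = {a, b, c} := by
  refine (Set.eq_of_subset_of_ncard_le ?_ ?_ (Set.finite_of_ncard_ne_zero (by omega))).symm
  · rintro w (rfl | rfl | rfl) <;> assumption
  · rw [h, Set.ncard_eq_three.2 ⟨a, b, c, hab, hac, hbc, rfl⟩]

lemma exists_neighborSet_eq_of_ncard_eq_three {u v : V} (h : (G.neighborSet u).ncard = 3)
    (huv : G.Adj u v) : ∃ a b, a ≠ b ∧ v ≠ a ∧ v ≠ b ∧ G.neighborSet u = {v, a, b} := by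
  obtain ⟨a, b, c, hab, hac, hbc, hN⟩ := Set.ncard_eq_three.1 h
  have hv : v ∈ G.neighborSet u := huv
  rw [hN] at hv
  rcases hv with rfl | rfl | rfl
  · exact ⟨b, c, hbc, hab, hac, hN⟩
  · exact ⟨a, c, hac, hab.symm, hbc, hN.trans (Set.insert_comm _ _ _)⟩
  · refine ⟨a, b, hab, hac.symm, hbc.symm, hN.trans ?_⟩
    rw [Set.pair_comm, Set.insert_comm, Set.pair_comm]

lemma eq_or_eq_or_eq_of_neighborSet_eq {u a b c w : V} (hN : G.neighborSet u = {a, b, c})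
    (h : G.Adj u w) : w = a ∨ w = b ∨ w = c := by
  rwa [← mem_neighborSet, hN] at h

lemma adj_of_neighborSet_eq {u a b c : V} (hN : G.neighborSet u = {a, b, c}) :
    G.Adj u a ∧ G.Adj u b ∧ G.Adj u c := by
  simp [← mem_neighborSet, hN]

lemma injective_vec_four {s t a b : V} (hst : s ≠ t) (hsa : s ≠ a) (hsb : s ≠ b) (hta : t ≠ a)
    (htb : t ≠ b) (hab : a ≠ b) : Injective ![s, t, a, b] := by
  simp [Injective, Fin.forall_fin_succ, hst, hsa, hsb, hta, htb, hab, hst.symm, hsa.symm,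
    hsb.symm, hta.symm, htb.symm, hab.symm]

def IsColoringOn (G : SimpleGraph V) (S : Set V) (c : V → α) : Prop :=
  ∀ ⦃u⦄, u ∈ S → ∀ ⦃v⦄, v ∈ S → G.Adj u v → c u ≠ c v

namespace IsColoringOn

variable {S T : Set V} {c : V → α}

lemma congr (hc : G.IsColoringOn S c) {c' : V → α} (h : Set.EqOn c c' S) :
    G.IsColoringOn S c' := by
  intro u hu v hv huv
  rw [← h hu, ← h hv]
  exact hc hu hv huv

lemma comp (hc : G.IsColoringOn S c) {β : Type*} {σ : α → β} (hσ : Injective σ) :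
    G.IsColoringOn S (σ ∘ c) :=
  fun _ hu _ hv huv => hσ.ne (hc hu hv huv)

lemma union (hS : G.IsColoringOn S c) (hT : G.IsColoringOn T c)
    (hST : ∀ ⦃u⦄, u ∈ S → ∀ ⦃v⦄, v ∈ T → G.Adj u v → c u ≠ c v) :
    G.IsColoringOn (S ∪ T) c := by
  rintro u (hu | hu) v (hv | hv) huv
  exacts [hS hu hv huv, hST hu hv huv, (hST hv hu huv.symm).symm, hT hu hv huv]

lemma update [DecidableEq V] (hc : G.IsColoringOn S c) {v : V} {a : α}
    (ha : ∀ ⦃u⦄, u ∈ S → G.Adj v u → c u ≠ a) :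
    G.IsColoringOn (insert v S) (Function.update c v a) := by
  intro u hu w hw huw
  rcases eq_or_ne u v with rfl | hu'
  · rw [update_self, update_of_ne huw.ne']
    exact (ha (Set.mem_of_mem_insert_of_ne hw huw.ne') huw).symm
  rcases eq_or_ne w v with rfl | hw'
  · rw [update_self, update_of_ne hu']
    exact ha (Set.mem_of_mem_insert_of_ne hu hu') huw.symm
  rw [update_of_ne hu', update_of_ne hw']
  exact hc (Set.mem_of_mem_insert_of_ne hu hu') (Set.mem_of_mem_insert_of_ne hw hw') huw

lemma nonempty_coloring_of_insert_insert [DecidableEq V] [DecidableEq α]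
    [Fintype α] {T : Set V} {c : V → α} {v w : V} (hc : G.IsColoringOn T c)
    (hT : insert v (insert w T) = Set.univ) (hvT : v ∉ T) {Fv Fw : Finset α}
    (hFv : Fv.card + 1 < Fintype.card α) (hFw : Fw.card < Fintype.card α)
    (hv : ∀ ⦃u⦄, G.Adj v u → u ≠ w → c u ∈ Fv) (hw : ∀ ⦃u⦄, G.Adj w u → u ≠ v → c u ∈ Fw) :
    Nonempty (G.Coloring α) := by
  obtain ⟨β, -, hβ⟩ := Finset.exists_mem_notMem_of_card_lt_card (t := Finset.univ) (s := Fw)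
    (by simpa using hFw)
  obtain ⟨γ, -, hγ⟩ := Finset.exists_mem_notMem_of_card_lt_card (t := Finset.univ)
    (s := insert β Fv) (by simpa using (Finset.card_insert_le β Fv).trans_lt hFv)
  rw [Finset.mem_insert, not_or] at hγ
  have hcw : G.IsColoringOn (insert w T) (Function.update c w β) :=
    hc.update fun u hu hwu hβu => hβ (hβu ▸ hw hwu (ne_of_mem_of_not_mem hu hvT))
  have hcv := hcw.update (v := v) (a := γ) fun u hu hvu => by
    rcases eq_or_ne u w with rfl | huw
    · rw [update_self]
      exact Ne.symm hγ.1
    · rw [update_of_ne huw]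
      exact ne_of_mem_of_not_mem (hv hvu huw) hγ.2
  rw [hT] at hcv
  exact ⟨Coloring.mk _ fun huv => hcv trivial trivial huv⟩

end IsColoringOn

lemma reachable_iff_not_reachable_of_forall {a b v : V} (hab : ¬ G.Reachable a b)
    (hall : ∀ u, G.Reachable u a ∨ G.Reachable u b) : G.Reachable v b ↔ ¬ G.Reachable v a :=
  ⟨fun hb ha => hab (ha.symm.trans hb), (hall v).resolve_left⟩

def TwoEdgeBoundary (G : SimpleGraph V) (S : Set V) (s x t y : V) : Prop :=
  ∀ ⦃u w⦄, u ∈ S → w ∉ S → G.Adj u w → u = s ∧ w = x ∨ u = t ∧ w = y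

lemma twoEdgeBoundary_reachable_deleteEdges {s x t y z : V}
    (hx : ¬ (G.deleteEdges {s(s, x), s(t, y)}).Reachable x z)
    (hy : ¬ (G.deleteEdges {s(s, x), s(t, y)}).Reachable y z) :
    G.TwoEdgeBoundary {u | (G.deleteEdges {s(s, x), s(t, y)}).Reachable u z} s x t y := by
  intro u w hu hw huw
  by_contra hne
  refine hw (Adj.reachable ?_ |>.symm.trans hu)
  refine (deleteEdges_adj ..).2 ⟨huw, ?_⟩
  rintro (h | h) <;> rcases Sym2.eq_iff.1 h with ⟨rfl, rfl⟩ | ⟨rfl, rfl⟩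
  exacts [hne (.inl ⟨rfl, rfl⟩), hx hu, hne (.inr ⟨rfl, rfl⟩), hy hu]

lemma induce_le_induce_deleteEdges {S : Set V} {s x t y : V} (hx : x ∉ S) (hy : y ∉ S) :
    G.induce S ≤ (G.deleteEdges {s(s, x), s(t, y)}).induce S := by
  intro u v huv
  refine (deleteEdges_adj ..).2 ⟨huv, ?_⟩
  rintro (h | h) <;> rcases Sym2.eq_iff.1 h with ⟨-, h⟩ | ⟨h, -⟩
  exacts [hx (h ▸ v.2), hx (h ▸ u.2), hy (h ▸ v.2), hy (h ▸ u.2)]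

namespace TwoEdgeBoundary

variable {S : Set V} {s x t y u v a b : V}

lemma graphSquare_induce_adj (hS : G.TwoEdgeBoundary S s x t y) (hxy : x ≠ y) (hu : u ∈ S)
    (hv : v ∈ S) (h : (graphSquare G).Adj u v) :
    (graphSquare (G.induce S)).Adj ⟨u, hu⟩ ⟨v, hv⟩ := by
  obtain ⟨hne, huv | ⟨w, huw, hwv⟩⟩ := h
  · exact ⟨by simpa using hne, .inl huv⟩
  by_cases hw : w ∈ S
  · exact ⟨by simpa using hne, .inr ⟨⟨w, hw⟩, huw, hwv⟩⟩
  rcases hS hu hw huw with ⟨rfl, rfl⟩ | ⟨rfl, rfl⟩ <;>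
    rcases hS hv hw hwv.symm with ⟨rfl, h⟩ | ⟨rfl, h⟩
  exacts [absurd rfl hne, absurd h hxy, absurd h hxy.symm, absurd rfl hne]

lemma eq_of_graphSquare_adj {R : Set V} {s' t' : V} (hS : G.TwoEdgeBoundary S s x t y)
    (hR : G.TwoEdgeBoundary R s' x t' y) (hxy : x ≠ y) (hxR : x ∉ R) (hyR : y ∉ R)
    (hu : u ∈ S) (hv : v ∈ R) (hvS : v ∉ S) (h : (graphSquare G).Adj u v) :
    u = s ∧ v = s' ∨ u = t ∧ v = t' := by
  obtain ⟨-, huv | ⟨w, huw, hwv⟩⟩ := h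
  · rcases hS hu hvS huv with ⟨-, rfl⟩ | ⟨-, rfl⟩
    exacts [absurd hv hxR, absurd hv hyR]
  by_cases hwS : w ∈ S
  · rcases hS hwS hvS hwv with ⟨-, rfl⟩ | ⟨-, rfl⟩
    exacts [absurd hv hxR, absurd hv hyR]
  have hwR : w ∉ R := by
    rcases hS hu hwS huw with ⟨-, rfl⟩ | ⟨-, rfl⟩ <;> assumption
  rcases hS hu hwS huw with ⟨hu, rfl⟩ | ⟨hu, rfl⟩ <;>
    rcases hR hv hwR hwv.symm with ⟨hv, hw⟩ | ⟨hv, hw⟩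
  exacts [.inl ⟨hu, hv⟩, absurd hw hxy, absurd hw.symm hxy, .inr ⟨hu, hv⟩]

lemma mem_of_adj {w : V} (hS : G.TwoEdgeBoundary S s x t y) (hs : s ∈ S)
    (hst : s ≠ t) (hsw : G.Adj s w) (hwx : w ≠ x) : w ∈ S := by
  by_contra hw
  rcases hS hs hw hsw with ⟨-, h⟩ | ⟨h, -⟩
  exacts [hwx h, hst h]

lemma exists_isColoringOn_graphSquare (hS : G.TwoEdgeBoundary S s x t y)
    (hxy : x ≠ y) (hs : s ∈ S) (ht : t ∈ S) (hst : s ≠ t) (hnst : ¬ G.Adj s t)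
    (hN : G.neighborSet s = {x, a, b}) (hab : a ≠ b) (hxa : x ≠ a) (hxb : x ≠ b)
    {K : SimpleGraph S} (hK : G.induce S ≤ K)
    (C : (graphSquare (addEdge K ⟨s, hs⟩ ⟨t, ht⟩)).Coloring α) :
    ∃ c : V → α, (graphSquare G).IsColoringOn S c ∧ Injective (c ∘ ![s, t, a, b]) := by
  classical
  obtain ⟨-, hsa, hsb⟩ := adj_of_neighborSet_eq hN
  have ha := hS.mem_of_adj hs hst hsa hxa.symm
  have hb := hS.mem_of_adj hs hst hsb hxb.symm
  let c : V → α := fun v => if h : v ∈ S then C ⟨v, h⟩ else C ⟨s, hs⟩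
  have hc : c ∘ Subtype.val = C := funext fun v => dif_pos v.2
  refine ⟨c, fun u hu v hv huv => ?_, ?_⟩
  · simp only [c, dif_pos hu, dif_pos hv]
    exact C.valid <| graphSquare_mono (hK.trans (le_addEdge _ _))
      (hS.graphSquare_induce_adj hxy hu hv huv)
  have hinj : Set.InjOn c {s, t, a, b} := by
    have hC := C.injOn_insert_neighborSet ⟨s, hs⟩
    rw [← hc] at hC
    refine hC.image_of_comp.mono ?_
    rintro v (rfl | rfl | rfl | rfl)
    · exact ⟨_, Set.mem_insert _ _, rfl⟩
    · exact ⟨_, .inr (addEdge_adj_self fun h => hst (congrArg Subtype.val h)), rfl⟩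
    · exact ⟨⟨v, ha⟩, .inr (le_addEdge _ _ (hK hsa)), rfl⟩
    · exact ⟨⟨v, hb⟩, .inr (le_addEdge _ _ (hK hsb)), rfl⟩
  refine (hinj.injective_iff _ ?_).2 (injective_vec_four hst hsa.ne hsb.ne ?_ ?_ hab)
  · rintro _ ⟨i, rfl⟩
    fin_cases i <;> simp
  all_goals rintro rfl
  exacts [hnst hsa, hnst hsb]

end TwoEdgeBoundary

/-- `V = L ⊔ R ⊔ {x₂, y₂}`: in the theorem `L` is `V(G₁)` and `R` is `V(G₂) \ {x₂, y₂}`. -/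
structure IsTwoEdgeCutSplit (G : SimpleGraph V) (L R : Set V) (x₁ y₁ x₂ y₂ x₃ y₃ : V) :
    Prop where
  mem_right : ∀ v, v ∈ R ↔ v ∉ L ∧ v ≠ x₂ ∧ v ≠ y₂
  x₁_mem : x₁ ∈ L
  y₁_mem : y₁ ∈ L
  x₃_mem : x₃ ∈ R
  y₃_mem : y₃ ∈ R
  x₂_notMem : x₂ ∉ L
  y₂_notMem : y₂ ∉ L
  boundary : G.TwoEdgeBoundary L x₁ x₂ y₁ y₂
  neighborSet_x₂ : G.neighborSet x₂ = {x₁, y₂, x₃}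
  neighborSet_y₂ : G.neighborSet y₂ = {y₁, x₂, y₃}

namespace IsTwoEdgeCutSplit

variable {L R : Set V} {x₁ y₁ x₂ y₂ x₃ y₃ : V} (hS : G.IsTwoEdgeCutSplit L R x₁ y₁ x₂ y₂ x₃ y₃)
include hS

lemma x₂_ne_y₂ : x₂ ≠ y₂ := (adj_of_neighborSet_eq hS.neighborSet_x₂).2.1.ne

lemma notMem_left {v : V} (hv : v ∈ R) : v ∉ L := ((hS.mem_right v).1 hv).1

lemma x₂_notMem_right : x₂ ∉ R := fun h => ((hS.mem_right x₂).1 h).2.1 rfl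

lemma y₂_notMem_right : y₂ ∉ R := fun h => ((hS.mem_right y₂).1 h).2.2 rfl

lemma insert_insert_union : insert x₂ (insert y₂ (L ∪ R)) = Set.univ := by
  refine Set.eq_univ_of_forall fun v => ?_
  simp only [Set.mem_insert_iff, Set.mem_union, hS.mem_right]
  tauto

lemma boundary_right : G.TwoEdgeBoundary R x₃ x₂ y₃ y₂ := by
  intro u w hu hw huw
  obtain ⟨huL, hux₂, huy₂⟩ := (hS.mem_right u).1 hu
  by_cases hwL : w ∈ L
  · rcases hS.boundary hwL huL huw.symm with ⟨-, rfl⟩ | ⟨-, rfl⟩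
    exacts [absurd rfl hux₂, absurd rfl huy₂]
  obtain rfl | rfl : w = x₂ ∨ w = y₂ := by simpa [hS.mem_right, hwL, or_iff_not_imp_left] using hw
  · rcases eq_or_eq_or_eq_of_neighborSet_eq hS.neighborSet_x₂ huw.symm with rfl | rfl | rfl
    exacts [absurd hS.x₁_mem huL, absurd rfl huy₂, .inl ⟨rfl, rfl⟩]
  · rcases eq_or_eq_or_eq_of_neighborSet_eq hS.neighborSet_y₂ huw.symm with rfl | rfl | rfl
    exacts [absurd hS.y₁_mem huL, absurd rfl hux₂, .inr ⟨rfl, rfl⟩]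

lemma exists_isColoringOn_union {cL cR : V → α}
    (hcL : (graphSquare G).IsColoringOn L cL) (hcR : (graphSquare G).IsColoringOn R cR)
    {a₁ a₂ p q : V} (ha₁ : a₁ ∈ L) (ha₂ : a₂ ∈ L) (hp : p ∈ R) (hq : q ∈ R)
    (hL : Injective (cL ∘ ![x₁, y₁, a₁, a₂])) (hR : Injective (cR ∘ ![x₃, y₃, p, q])) :
    ∃ c : V → α, (graphSquare G).IsColoringOn (L ∪ R) c ∧
      c x₃ = c y₁ ∧ c y₃ = c x₁ ∧ c p = c a₁ ∧ c q = c a₂ := by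
  classical
  obtain ⟨σ, hσ⟩ := Equiv.Perm.exists_extending_pair _ _ hR (hL.comp (Equiv.swap 0 1).injective)
  have hσx₃ : σ (cR x₃) = cL y₁ := hσ 0
  have hσy₃ : σ (cR y₃) = cL x₁ := hσ 1
  have hσp : σ (cR p) = cL a₁ := hσ 2
  have hσq : σ (cR q) = cL a₂ := hσ 3
  have hcL_x₁_y₁ : cL x₁ ≠ cL y₁ := hL.ne (show (0 : Fin 4) ≠ 1 by decide)
  set c := L.piecewise cL (σ ∘ cR)
  have hc_left : Set.EqOn cL c L := fun v hv => (Set.piecewise_eq_of_mem _ _ _ hv).symm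
  have hc_right : Set.EqOn (σ ∘ cR) c R :=
    fun v hv => (Set.piecewise_eq_of_notMem _ _ _ (hS.notMem_left hv)).symm
  refine ⟨c, (hcL.congr hc_left).union ((hcR.comp σ.injective).congr hc_right) ?_, ?_⟩
  · intro u hu v hv huv
    rw [← hc_left hu, ← hc_right hv]
    rcases hS.boundary.eq_of_graphSquare_adj hS.boundary_right hS.x₂_ne_y₂ hS.x₂_notMem_right
      hS.y₂_notMem_right hu hv (hS.notMem_left hv) huv with ⟨rfl, rfl⟩ | ⟨rfl, rfl⟩
    · rw [comp_apply, hσx₃]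
      exact hcL_x₁_y₁
    · rw [comp_apply, hσy₃]
      exact hcL_x₁_y₁.symm
  rw [← hc_left hS.x₁_mem, ← hc_left hS.y₁_mem, ← hc_left ha₁, ← hc_left ha₂,
    ← hc_right hS.x₃_mem, ← hc_right hS.y₃_mem, ← hc_right hp, ← hc_right hq]
  exact ⟨hσx₃, hσy₃, hσp, hσq⟩

lemma mem_of_graphSquare_adj_y₂ [DecidableEq α] {c : V → α} {b₁ b₂ r s : V}
    (hNy₁ : G.neighborSet y₁ = {y₂, b₁, b₂}) (hNy₃ : G.neighborSet y₃ = {y₂, r, s})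
    (hx₃ : c x₃ = c y₁) (hy₃ : c y₃ = c x₁) {u : V} (h : (graphSquare G).Adj y₂ u)
    (hu : u ≠ x₂) : c u ∈ ({c x₁, c y₁, c b₁, c b₂, c r, c s} : Finset α) := by
  obtain ⟨hne, hy₂u | ⟨w, hy₂w, hwu⟩⟩ := h
  · rcases eq_or_eq_or_eq_of_neighborSet_eq hS.neighborSet_y₂ hy₂u with rfl | rfl | rfl
    exacts [by simp, absurd rfl hu, by simp [hy₃]]
  rcases eq_or_eq_or_eq_of_neighborSet_eq hS.neighborSet_y₂ hy₂w with rfl | rfl | rfl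
  · rcases eq_or_eq_or_eq_of_neighborSet_eq hNy₁ hwu with rfl | rfl | rfl
    exacts [absurd rfl hne, by simp, by simp]
  · rcases eq_or_eq_or_eq_of_neighborSet_eq hS.neighborSet_x₂ hwu with rfl | rfl | rfl
    exacts [by simp, absurd rfl hne, by simp [hx₃]]
  · rcases eq_or_eq_or_eq_of_neighborSet_eq hNy₃ hwu with rfl | rfl | rfl
    exacts [absurd rfl hne, by simp, by simp]

lemma mem_of_graphSquare_adj_x₂ [DecidableEq α] {c : V → α} {a₁ a₂ p q : V}
    (hNx₁ : G.neighborSet x₁ = {x₂, a₁, a₂}) (hNx₃ : G.neighborSet x₃ = {x₂, p, q})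
    (hx₃ : c x₃ = c y₁) (hy₃ : c y₃ = c x₁) (hp : c p = c a₁) (hq : c q = c a₂) {u : V}
    (h : (graphSquare G).Adj x₂ u) (hu : u ≠ y₂) :
    c u ∈ ({c x₁, c y₁, c a₁, c a₂} : Finset α) := by
  obtain ⟨hne, hx₂u | ⟨w, hx₂w, hwu⟩⟩ := h
  · rcases eq_or_eq_or_eq_of_neighborSet_eq hS.neighborSet_x₂ hx₂u with rfl | rfl | rfl
    exacts [by simp, absurd rfl hu, by simp [hx₃]]
  rcases eq_or_eq_or_eq_of_neighborSet_eq hS.neighborSet_x₂ hx₂w with rfl | rfl | rfl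
  · rcases eq_or_eq_or_eq_of_neighborSet_eq hNx₁ hwu with rfl | rfl | rfl
    exacts [absurd rfl hne, by simp, by simp]
  · rcases eq_or_eq_or_eq_of_neighborSet_eq hS.neighborSet_y₂ hwu with rfl | rfl | rfl
    exacts [by simp, absurd rfl hne, by simp [hy₃]]
  · rcases eq_or_eq_or_eq_of_neighborSet_eq hNx₃ hwu with rfl | rfl | rfl
    exacts [absurd rfl hne, by simp [hp], by simp [hq]]

theorem nonempty_coloring_graphSquare [Fintype α] (hα : 7 ≤ Fintype.card α)
    (hcubic : ∀ u, (G.neighborSet u).ncard = 3) (hx₁y₁ : x₁ ≠ y₁) (hnx : ¬ G.Adj x₁ y₁)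
    (hx₃y₃ : x₃ ≠ y₃) (hny : ¬ G.Adj x₃ y₃) {K₁ : SimpleGraph L} {K₂ : SimpleGraph R}
    (hK₁ : G.induce L ≤ K₁) (hK₂ : G.induce R ≤ K₂)
    (C₁ : (graphSquare (addEdge K₁ ⟨x₁, hS.x₁_mem⟩ ⟨y₁, hS.y₁_mem⟩)).Coloring α)
    (C₂ : (graphSquare (addEdge K₂ ⟨x₃, hS.x₃_mem⟩ ⟨y₃, hS.y₃_mem⟩)).Coloring α) :
    Nonempty ((graphSquare G).Coloring α) := by
  classical
  obtain ⟨hx₂x₁, -, hx₂x₃⟩ := adj_of_neighborSet_eq hS.neighborSet_x₂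
  obtain ⟨hy₂y₁, -, hy₂y₃⟩ := adj_of_neighborSet_eq hS.neighborSet_y₂
  obtain ⟨a₁, a₂, ha, hx₂a₁, hx₂a₂, hNx₁⟩ :=
    exists_neighborSet_eq_of_ncard_eq_three (hcubic x₁) hx₂x₁.symm
  obtain ⟨b₁, b₂, -, -, -, hNy₁⟩ := exists_neighborSet_eq_of_ncard_eq_three (hcubic y₁) hy₂y₁.symm
  obtain ⟨p, q, hpq, hx₂p, hx₂q, hNx₃⟩ :=
    exists_neighborSet_eq_of_ncard_eq_three (hcubic x₃) hx₂x₃.symm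
  obtain ⟨r, s, -, -, -, hNy₃⟩ := exists_neighborSet_eq_of_ncard_eq_three (hcubic y₃) hy₂y₃.symm
  obtain ⟨-, hx₁a₁, hx₁a₂⟩ := adj_of_neighborSet_eq hNx₁
  obtain ⟨-, hx₃p, hx₃q⟩ := adj_of_neighborSet_eq hNx₃
  obtain ⟨cL, hcL, hinjL⟩ := hS.boundary.exists_isColoringOn_graphSquare hS.x₂_ne_y₂ hS.x₁_mem
    hS.y₁_mem hx₁y₁ hnx hNx₁ ha hx₂a₁ hx₂a₂ hK₁ C₁
  obtain ⟨cR, hcR, hinjR⟩ := hS.boundary_right.exists_isColoringOn_graphSquare hS.x₂_ne_y₂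
    hS.x₃_mem hS.y₃_mem hx₃y₃ hny hNx₃ hpq hx₂p hx₂q hK₂ C₂
  have mem_L {w} := hS.boundary.mem_of_adj (w := w) hS.x₁_mem hx₁y₁
  have mem_R {w} := hS.boundary_right.mem_of_adj (w := w) hS.x₃_mem hx₃y₃
  obtain ⟨c, hc, hx₃, hy₃, hp, hq⟩ := hS.exists_isColoringOn_union hcL hcR
    (mem_L hx₁a₁ hx₂a₁.symm) (mem_L hx₁a₂ hx₂a₂.symm) (mem_R hx₃p hx₂p.symm)
    (mem_R hx₃q hx₂q.symm) hinjL hinjR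
  refine hc.nonempty_coloring_of_insert_insert hS.insert_insert_union
    (fun h => h.elim hS.x₂_notMem hS.x₂_notMem_right) ?_ ?_
    (fun u h hu => hS.mem_of_graphSquare_adj_x₂ hNx₁ hNx₃ hx₃ hy₃ hp hq h hu)
    (fun u h hu => hS.mem_of_graphSquare_adj_y₂ hNy₁ hNy₃ hx₃ hy₃ h hu)
  · linarith [Finset.card_le_four (a := c x₁) (b := c y₁) (c := c a₁) (d := c a₂)]
  · linarith [Finset.card_le_six (a := c x₁) (b := c y₁) (c := c b₁) (d := c b₂) (e := c r)
      (f := c s)]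

end IsTwoEdgeCutSplit

end SimpleGraph

open SimpleGraph

theorem colorable_square_of_two_edge_cut'_general
    {V : Type*} (G : SimpleGraph V)
    (hcubic : ∀ u : V, {w | G.Adj u w}.ncard = 3)
    (x₁ x₂ y₁ y₂ x₃ y₃ : V)
    (hdistinct : ([x₁, x₂, y₁, y₂] : List V).Pairwise (· ≠ ·))
    (hx : G.Adj x₁ x₂) (hy : G.Adj y₁ y₂)
    (hx1y1 : ¬ G.Adj x₁ y₁) (hx2y2 : G.Adj x₂ y₂)
    (hx3adj : G.Adj x₂ x₃) (hx3ne1 : x₃ ≠ x₁) (hx3ney2 : x₃ ≠ y₂)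
    (hy3adj : G.Adj y₂ y₃) (hy3ne1 : y₃ ≠ y₁) (hy3nex2 : y₃ ≠ x₂)
    (hx3y3 : x₃ ≠ y₃) (hx3y3adj : ¬ G.Adj x₃ y₃)
    (G' : SimpleGraph V) (hG' : G' = G.deleteEdges {s(x₁, x₂), s(y₁, y₂)})
    (hsep : ¬ G'.Reachable x₁ x₂)
    (hall : ∀ u : V, G'.Reachable u x₁ ∨ G'.Reachable u x₂)
    (hy1 : G'.Reachable y₁ x₁) (hy2 : G'.Reachable y₂ x₂)
    (hx3r : G'.Reachable x₃ x₂) (hy3r : G'.Reachable y₃ x₂)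
    (h1 : (graphSquare (addEdge (G'.induce {u | G'.Reachable u x₁})
        ⟨x₁, SimpleGraph.Reachable.refl x₁⟩ ⟨y₁, hy1⟩)).Colorable 7)
    (h2 : (graphSquare (addEdge
        (G'.induce {u | G'.Reachable u x₂ ∧ u ≠ x₂ ∧ u ≠ y₂})
        ⟨x₃, ⟨hx3r, hx3adj.ne', hx3ney2⟩⟩
        ⟨y₃, ⟨hy3r, hy3nex2, hy3adj.ne'⟩⟩)).Colorable 7) :
    (graphSquare G).Colorable 7 := by
  subst hG'
  set G' := G.deleteEdges {s(x₁, x₂), s(y₁, y₂)}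
  obtain ⟨hx₁y₁, hx₁y₂, hx₂y₁⟩ : x₁ ≠ y₁ ∧ x₁ ≠ y₂ ∧ x₂ ≠ y₁ := by
    simp only [List.pairwise_cons, List.mem_cons] at hdistinct
    exact ⟨hdistinct.1 _ (by simp), hdistinct.1 _ (by simp), hdistinct.2.1 _ (by simp)⟩
  have hx₂ : ¬ G'.Reachable x₂ x₁ := fun h => hsep h.symm
  have hy₂ : ¬ G'.Reachable y₂ x₁ := fun h => hsep (h.symm.trans hy2)
  have hS : G.IsTwoEdgeCutSplit {u | G'.Reachable u x₁}
      {u | G'.Reachable u x₂ ∧ u ≠ x₂ ∧ u ≠ y₂} x₁ y₁ x₂ y₂ x₃ y₃ :=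
    { mem_right := fun v => and_congr_left' (reachable_iff_not_reachable_of_forall hsep hall)
      x₁_mem := .refl x₁
      y₁_mem := hy1
      x₃_mem := ⟨hx3r, hx3adj.ne', hx3ney2⟩
      y₃_mem := ⟨hy3r, hy3nex2, hy3adj.ne'⟩
      x₂_notMem := hx₂
      y₂_notMem := hy₂
      boundary := twoEdgeBoundary_reachable_deleteEdges hx₂ hy₂
      neighborSet_x₂ := neighborSet_eq_of_ncard_eq_three (hcubic x₂) hx.symm hx2y2 hx3adj hx₁y₂
        hx3ne1.symm hx3ney2.symm
      neighborSet_y₂ := neighborSet_eq_of_ncard_eq_three (hcubic y₂) hy.symm hx2y2.symm hy3adj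
        hx₂y₁.symm hy3ne1.symm hy3nex2.symm }
  obtain ⟨C₁⟩ := h1
  obtain ⟨C₂⟩ := h2
  exact hS.nonempty_coloring_graphSquare (by simp) hcubic hx₁y₁ hx1y1 hx3y3 hx3y3adj
    (induce_le_induce_deleteEdges hx₂ hy₂)
    (induce_le_induce_deleteEdges hS.x₂_notMem_right hS.y₂_notMem_right) C₁ C₂

/-- Let `G` be a cubic graph with two edges `x₁x₂`, `y₁y₂` whose deletion
leaves exactly two components `G₁ ∋ x₁, y₁` and `G₂ ∋ x₂, y₂`, where `x₁y₁` is
not an edge of `G` but `x₂y₂` is; let `x₃`, `y₃` be the third neighbors of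
`x₂`, `y₂` respectively (they lie in `G₂`), with `x₃ ≠ y₃` and `x₃y₃` not an
edge of `G`. If `(G₁ + x₁y₁)²` and `(G₂ - x₂ - y₂ + x₃y₃)²` are both
`7`-colorable, then `G²` is `7`-colorable. -/
theorem colorable_square_of_two_edge_cut'
    {V : Type*} [Fintype V] (G : SimpleGraph V)
    (hcubic : ∀ u : V, {w | G.Adj u w}.ncard = 3)
    (x₁ x₂ y₁ y₂ x₃ y₃ : V)
    (hdistinct : ([x₁, x₂, y₁, y₂] : List V).Pairwise (· ≠ ·))
    (hx : G.Adj x₁ x₂) (hy : G.Adj y₁ y₂)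
    (hx1y1 : ¬ G.Adj x₁ y₁) (hx2y2 : G.Adj x₂ y₂)
    (hx3adj : G.Adj x₂ x₃) (hx3ne1 : x₃ ≠ x₁) (hx3ney2 : x₃ ≠ y₂)
    (hy3adj : G.Adj y₂ y₃) (hy3ne1 : y₃ ≠ y₁) (hy3nex2 : y₃ ≠ x₂)
    (hx3y3 : x₃ ≠ y₃) (hx3y3adj : ¬ G.Adj x₃ y₃)
    (G' : SimpleGraph V) (hG' : G' = G.deleteEdges {s(x₁, x₂), s(y₁, y₂)})
    (hsep : ¬ G'.Reachable x₁ x₂)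
    (hall : ∀ u : V, G'.Reachable u x₁ ∨ G'.Reachable u x₂)
    (hy1 : G'.Reachable y₁ x₁) (hy2 : G'.Reachable y₂ x₂)
    (hx3r : G'.Reachable x₃ x₂) (hy3r : G'.Reachable y₃ x₂)
    (h1 : (graphSquare (addEdge (G'.induce {u | G'.Reachable u x₁})
        ⟨x₁, SimpleGraph.Reachable.refl x₁⟩ ⟨y₁, hy1⟩)).Colorable 7)
    (h2 : (graphSquare (addEdge
        (G'.induce {u | G'.Reachable u x₂ ∧ u ≠ x₂ ∧ u ≠ y₂})
        ⟨x₃, ⟨hx3r, hx3adj.ne', hx3ney2⟩⟩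
        ⟨y₃, ⟨hy3r, hy3nex2, hy3adj.ne'⟩⟩)).Colorable 7) :
    (graphSquare G).Colorable 7 :=
  colorable_square_of_two_edge_cut'_general G hcubic x₁ x₂ y₁ y₂ x₃ y₃ hdistinct hx hy hx1y1 hx2y2
    hx3adj hx3ne1 hx3ney2 hy3adj hy3ne1 hy3nex2 hx3y3 hx3y3adj G' hG' hsep hall hy1 hy2 hx3r hy3r h1
    h2
end
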